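/- arXiv:2207.14367 — 2 statements merged into one kernel-verified Lean document; each statement's English description precedes it below -/
import Mathlib

section
/- Let λ ≥ 0, τ ≥ 0 and let f(P) = trace(CᵀP) + (λ/2)‖Pᵀ𝟙 − k‖² + (τ/2)‖P − P⁰‖_F². Then the gradient of f is Lipschitz continuous with constant λN + τ: for all P₁, P₂ ∈ ℝ^{N×M}, ‖∇f(P₁) − ∇f(P₂)‖_F ≤ (λN + τ) · ‖P₁ − P₂‖_F. -/
open Matrix

/-- `ℝ^{N×M}` with the Frobenius inner product and norm, modeled as a Euclidean space
indexed by entry positions `(i, j)`. -/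
abbrev MatE (N M : ℕ) := EuclideanSpace ℝ (Fin N × Fin M)

/-- `trace(Cᵀ P)` for `C, P ∈ ℝ^{N×M}`. -/
noncomputable def traceCT {N M : ℕ} (C P : MatE N M) : ℝ :=
  Matrix.trace ((Matrix.of fun i j => C (i, j))ᵀ * (Matrix.of fun i j => P (i, j)))

/-- `Pᵀ𝟙 ∈ ℝ^M`, the vector of column sums of `P`. -/
noncomputable def colSums {N M : ℕ} (P : MatE N M) : EuclideanSpace ℝ (Fin M) :=
  WithLp.toLp 2 (fun j => ∑ i, P (i, j))

/-- The OpArt objective with assignment prior: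
`f(P) = trace(CᵀP) + (λ/2)‖Pᵀ𝟙 − k‖² + (τ/2)‖P − P⁰‖_F²`. -/
noncomputable def opArtObjective {N M : ℕ} (C P0 : MatE N M)
    (k : EuclideanSpace ℝ (Fin M)) (lam tau : ℝ) (P : MatE N M) : ℝ :=
  traceCT C P + (lam / 2) * ‖colSums P - k‖ ^ 2 + (tau / 2) * ‖P - P0‖ ^ 2

/-! With `A` the column-sum map, `f(P) = ⟪C, P⟫ + (λ/2)‖A P - k‖² + (τ/2)‖P - P⁰‖²` has the
affine gradient `C + λ A†(A P - k) + τ (P - P⁰)`, so `∇f(P₁) - ∇f(P₂) = (λ A†A + τ)(P₁ - P₂)`.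
Since `‖A†A‖ = ‖A‖²`, and Cauchy–Schwarz on each column gives `‖A‖² ≤ N`, the Lipschitz
constant is `λN + τ`. -/

open InnerProductSpace ContinuousLinearMap
open scoped RealInnerProductSpace

section QuadraticObjective

variable {E F : Type*} [NormedAddCommGroup E] [InnerProductSpace ℝ E]
  [NormedAddCommGroup F] [InnerProductSpace ℝ F]

noncomputable def quadraticObjective (c x₀ : E) (A : E →L[ℝ] F) (k : F) (lam tau : ℝ)
    (y : E) : ℝ :=
  ⟪c, y⟫_ℝ + (lam / 2) * ‖A y - k‖ ^ 2 + (tau / 2) * ‖y - x₀‖ ^ 2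

variable [CompleteSpace E] [CompleteSpace F]

theorem hasGradientAt_quadraticObjective (c x₀ : E) (A : E →L[ℝ] F) (k : F) (lam tau : ℝ)
    (x : E) :
    HasGradientAt (quadraticObjective c x₀ A k lam tau)
      (c + lam • adjoint A (A x - k) + tau • (x - x₀)) x := by
  have hlin : HasFDerivAt (fun y => ⟪c, y⟫_ℝ) (innerSL ℝ c) x := (innerSL ℝ c).hasFDerivAt
  have hfit := (((A.hasFDerivAt (x := x)).sub_const k).norm_sq).const_mul (lam / 2)
  have hprior :=
    ((((ContinuousLinearMap.id ℝ E).hasFDerivAt (x := x)).sub_const x₀).norm_sq).const_mul (tau / 2)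
  rw [hasGradientAt_iff_hasFDerivAt]
  refine ((hlin.add hfit).add hprior).congr_fderiv ?_
  ext y
  simp only [map_add, map_smul, map_sub, _root_.add_apply, _root_.smul_apply, _root_.sub_apply,
    ContinuousLinearMap.comp_apply, coe_innerSL_apply, toDual_apply_apply, id_apply,
    adjoint_inner_left, smul_eq_mul, nsmul_eq_mul, Nat.cast_ofNat]
  ring

theorem gradient_quadraticObjective (c x₀ : E) (A : E →L[ℝ] F) (k : F) (lam tau : ℝ) :
    gradient (quadraticObjective c x₀ A k lam tau)
      = fun x => c + lam • adjoint A (A x - k) + tau • (x - x₀) :=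
  gradient_eq (hasGradientAt_quadraticObjective c x₀ A k lam tau)

theorem gradient_quadraticObjective_sub (c x₀ : E) (A : E →L[ℝ] F) (k : F) (lam tau : ℝ)
    (x y : E) :
    gradient (quadraticObjective c x₀ A k lam tau) x
        - gradient (quadraticObjective c x₀ A k lam tau) y
      = lam • (adjoint A ∘L A) (x - y) + tau • (x - y) := by
  simp only [gradient_quadraticObjective, ContinuousLinearMap.comp_apply, map_sub]
  module

theorem norm_gradient_quadraticObjective_sub_le (c x₀ : E) (A : E →L[ℝ] F) (k : F)
    {lam tau : ℝ} (hlam : 0 ≤ lam) (htau : 0 ≤ tau) (x y : E) :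
    ‖gradient (quadraticObjective c x₀ A k lam tau) x
        - gradient (quadraticObjective c x₀ A k lam tau) y‖
      ≤ (lam * ‖A‖ ^ 2 + tau) * ‖x - y‖ := by
  have hAA : ‖(adjoint A ∘L A) (x - y)‖ ≤ ‖A‖ ^ 2 * ‖x - y‖ := by
    rw [sq, ← norm_adjoint_comp_self]
    exact le_opNorm _ _
  calc _ = ‖lam • (adjoint A ∘L A) (x - y) + tau • (x - y)‖ := by
        rw [gradient_quadraticObjective_sub]
    _ ≤ lam * ‖(adjoint A ∘L A) (x - y)‖ + tau * ‖x - y‖ := by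
        grw [norm_add_le, norm_smul_of_nonneg hlam, norm_smul_of_nonneg htau]
    _ ≤ lam * (‖A‖ ^ 2 * ‖x - y‖) + tau * ‖x - y‖ := by gcongr
    _ = (lam * ‖A‖ ^ 2 + tau) * ‖x - y‖ := by ring

end QuadraticObjective

noncomputable def colSumsCLM (N M : ℕ) : MatE N M →L[ℝ] EuclideanSpace ℝ (Fin M) :=
  LinearMap.toContinuousLinearMap
    { toFun := colSums
      map_add' := fun P Q => by ext j; simp [colSums, Finset.sum_add_distrib]
      map_smul' := fun c P => by ext j; simp [colSums, Finset.mul_sum] }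

theorem colSumsCLM_apply {N M : ℕ} (P : MatE N M) : colSumsCLM N M P = colSums P := rfl

theorem traceCT_eq_inner {N M : ℕ} (C P : MatE N M) : traceCT C P = ⟪C, P⟫_ℝ := by
  simp [traceCT, Matrix.trace, Matrix.mul_apply, PiLp.inner_apply, Fintype.sum_prod_type_right,
    mul_comm]

theorem opArtObjective_eq_quadraticObjective {N M : ℕ} (C P0 : MatE N M)
    (k : EuclideanSpace ℝ (Fin M)) (lam tau : ℝ) :
    opArtObjective C P0 k lam tau = quadraticObjective C P0 (colSumsCLM N M) k lam tau := by
  ext P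
  rw [opArtObjective, quadraticObjective, traceCT_eq_inner, colSumsCLM_apply]

theorem norm_colSums_sq_le {N M : ℕ} (P : MatE N M) : ‖colSums P‖ ^ 2 ≤ N * ‖P‖ ^ 2 := by
  simp only [EuclideanSpace.norm_sq_eq, colSums, Real.norm_eq_abs, sq_abs,
    Fintype.sum_prod_type_right (f := fun p => P p ^ 2)]
  rw [Finset.mul_sum]
  gcongr with j
  simpa using sq_sum_le_card_mul_sum_sq (s := Finset.univ) (f := fun i : Fin N => P (i, j))

theorem norm_colSumsCLM_sq_le (N M : ℕ) : ‖colSumsCLM N M‖ ^ 2 ≤ N := by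
  have hbound : ‖colSumsCLM N M‖ ≤ √N := by
    refine opNorm_le_bound _ (Real.sqrt_nonneg _) fun P => ?_
    rw [colSumsCLM_apply, ← Real.sqrt_sq (norm_nonneg P), ← Real.sqrt_mul (Nat.cast_nonneg _)]
    exact Real.le_sqrt_of_sq_le (norm_colSums_sq_le P)
  calc ‖colSumsCLM N M‖ ^ 2 ≤ √(N : ℝ) ^ 2 := by gcongr
    _ = (N : ℝ) := Real.sq_sqrt (Nat.cast_nonneg _)

/-- Let `λ ≥ 0`, `τ ≥ 0` and
`f(P) = trace(CᵀP) + (λ/2)‖Pᵀ𝟙 − k‖² + (τ/2)‖P − P⁰‖_F²`. Then `∇f` is Lipschitz with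
constant `λN + τ`: `‖∇f(P₁) − ∇f(P₂)‖_F ≤ (λN + τ)·‖P₁ − P₂‖_F` for all `P₁, P₂`. -/
theorem gradient_lipschitz_with_prior (N M : ℕ) (C P0 : MatE N M)
    (k : EuclideanSpace ℝ (Fin M)) (lam tau : ℝ) (hlam : 0 ≤ lam) (htau : 0 ≤ tau) :
    ∀ P₁ P₂ : MatE N M,
      ‖gradient (opArtObjective C P0 k lam tau) P₁
        - gradient (opArtObjective C P0 k lam tau) P₂‖ ≤ (lam * N + tau) * ‖P₁ - P₂‖ := by
  intro P₁ P₂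
  rw [opArtObjective_eq_quadraticObjective]
  calc _ ≤ (lam * ‖colSumsCLM N M‖ ^ 2 + tau) * ‖P₁ - P₂‖ :=
        norm_gradient_quadraticObjective_sub_le _ _ _ _ hlam htau _ _
    _ ≤ (lam * N + tau) * ‖P₁ - P₂‖ := by grw [norm_colSumsCLM_sq_le]
end

section
/- Let M ≥ 1, h > 0, and let u ∈ ℝ^M be sorted in decreasing order: u₁ ≥ u₂ ≥ ... ≥ u_M. Define L = max{k ∈ {1,...,M} : (Σ_{r=1}^k u_r − h)/k < u_k} (this set contains k = 1, hence is nonempty), set τ = (Σ_{ℓ=1}^L u_ℓ − h)/L, and define v ∈ ℝ^M by v_j = max(u_j − τ, 0) for each j. Then v lies in the scaled simplex Δ_h = {x ∈ ℝ^M : x_j ≥ 0 for all j, Σ_{j=1}^M x_j = h}, and v is the Euclidean projection of u onto Δ_h: for every x ∈ Δ_h, ‖v − u‖ ≤ ‖x − u‖, with equality only if x = v. -/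
/-!
Clipping `u` at any level `t` gives the nearest point `v = max (u - t) 0` of the set
`{x ≥ 0, ∑ x = ∑ v}`: coordinatewise `u_j - v_j = min u_j t ≤ t` with equality where `v_j > 0`,
so `⟪u - v, x - v⟫ ≤ t (∑ x - ∑ v) = 0`, the variational inequality characterising the projection
onto a convex set. It remains to see that the sorted threshold `τ` has `∑ v = h`: by maximality of
`L` and sortedness, `τ < u_j` exactly for `j ≤ L`, so `∑ v = ∑_{j ≤ L} u_j - (L + 1) τ = h`.
-/

open Finset

section VariationalInequality

variable {E : Type*} [NormedAddCommGroup E] [InnerProductSpace ℝ E] {u v x : E}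

theorem sq_norm_sub_add_sq_norm_sub_le_of_real_inner_le_zero (h : inner ℝ (u - v) (x - v) ≤ 0) :
    ‖v - u‖ ^ 2 + ‖x - v‖ ^ 2 ≤ ‖x - u‖ ^ 2 := by
  have hsplit : x - u = (x - v) + (v - u) := by abel
  have hinner : inner ℝ (x - v) (v - u) = -inner ℝ (u - v) (x - v) := by
    rw [real_inner_comm, ← inner_neg_left, neg_sub]
  rw [hsplit, norm_add_sq_real, hinner]
  linarith

theorem norm_sub_le_of_real_inner_le_zero (h : inner ℝ (u - v) (x - v) ≤ 0) :
    ‖v - u‖ ≤ ‖x - u‖ := by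
  have := sq_norm_sub_add_sq_norm_sub_le_of_real_inner_le_zero h
  exact (sq_le_sq₀ (norm_nonneg _) (norm_nonneg _)).1 (by linarith [sq_nonneg ‖x - v‖])

theorem eq_of_norm_sub_eq_of_real_inner_le_zero (h : inner ℝ (u - v) (x - v) ≤ 0)
    (heq : ‖v - u‖ = ‖x - u‖) : x = v := by
  have := sq_norm_sub_add_sq_norm_sub_le_of_real_inner_le_zero h
  rw [heq] at this
  have hzero : ‖x - v‖ ^ 2 = 0 := le_antisymm (by linarith) (sq_nonneg _)
  simpa [sub_eq_zero] using hzero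

end VariationalInequality

theorem real_inner_sub_clip_sub_le_zero {ι : Type*} [Fintype ι] {u v x : EuclideanSpace ℝ ι}
    {t : ℝ} (hv : ∀ j, v j = max (u j - t) 0) (hx : ∀ j, 0 ≤ x j)
    (hsum : ∑ j, x j = ∑ j, v j) : inner ℝ (u - v) (x - v) ≤ 0 := by
  have hterm : ∀ j, (u j - v j) * (x j - v j) ≤ t * (x j - v j) := by
    intro j
    rw [hv j]
    rcases le_total (u j - t) 0 with hneg | hpos
    · rw [max_eq_right hneg]
      nlinarith [hx j]
    · rw [max_eq_left hpos, sub_sub_cancel]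
  calc inner ℝ (u - v) (x - v) = ∑ j, (u j - v j) * (x j - v j) := by
        simp only [PiLp.inner_apply, PiLp.sub_apply, RCLike.inner_apply, conj_trivial, mul_comm]
    _ ≤ ∑ j, t * (x j - v j) := sum_le_sum fun j _ => hterm j
    _ = 0 := by rw [← mul_sum, sum_sub_distrib, hsum, sub_self, mul_zero]

section SortedThreshold

variable {M : ℕ} (u : Fin M → ℝ) (h : ℝ)

/-- The paper's shift `τ` for the threshold index `k + 1` (indices here are 0-based). -/
noncomputable def prefixShift (k : Fin M) : ℝ :=
  ((∑ r ∈ Iic k, u r) - h) / ((k : ℕ) + 1)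

theorem prefixShift_lt_of_pos (hM : 0 < M) (hh : 0 < h) :
    prefixShift u h ⟨0, hM⟩ < u ⟨0, hM⟩ := by
  have hIic : Iic (⟨0, hM⟩ : Fin M) = {⟨0, hM⟩} := by
    ext k
    simp [Fin.le_def, Fin.ext_iff]
  simp only [prefixShift, hIic, sum_singleton, Nat.cast_zero, zero_add, div_one]
  linarith

theorem prefixShift_lt_iff_of_val_eq_succ {k k' : Fin M} (hk : (k' : ℕ) = k + 1) :
    prefixShift u h k' < u k' ↔ prefixShift u h k < u k' := by
  have hIic : Iic k' = insert k' (Iic k) := by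
    ext r
    simp only [mem_Iic, mem_insert, Fin.le_def, Fin.ext_iff, hk]
    omega
  have hnot : k' ∉ Iic k := by simp [Fin.le_def, hk]
  rw [prefixShift, prefixShift, hIic, sum_insert hnot, hk, div_lt_iff₀ (by positivity),
    div_lt_iff₀ (by positivity)]
  push_cast
  constructor <;> intro <;> linarith

variable {u h} {L : Fin M}

theorem prefixShift_lt_of_le (hsort : Antitone u) (hL : prefixShift u h L < u L) {j : Fin M}
    (hj : j ≤ L) : prefixShift u h L < u j :=
  hL.trans_le (hsort hj)

theorem le_prefixShift_of_lt (hsort : Antitone u)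
    (hmax : ∀ k, prefixShift u h k < u k → k ≤ L) {j : Fin M} (hj : L < j) :
    u j ≤ prefixShift u h L := by
  by_contra! hlt
  have hsucc : (L : ℕ) + 1 < M := Nat.lt_of_le_of_lt hj j.is_lt
  set L' : Fin M := ⟨L + 1, hsucc⟩
  have hL'j : L' ≤ j := Fin.le_def.2 hj
  have hL' : prefixShift u h L' < u L' :=
    (prefixShift_lt_iff_of_val_eq_succ u h rfl).2 (hlt.trans_le (hsort hL'j))
  exact absurd (hmax L' hL') (by simp [L', Fin.le_def])

theorem sum_max_sub_prefixShift (hsort : Antitone u) (hL : prefixShift u h L < u L)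
    (hmax : ∀ k, prefixShift u h k < u k → k ≤ L) :
    ∑ j, max (u j - prefixShift u h L) 0 = h := by
  set τ := prefixShift u h L
  have hhead : ∀ j ∈ Iic L, max (u j - τ) 0 = u j - τ := fun j hj =>
    max_eq_left (sub_nonneg.2 (prefixShift_lt_of_le hsort hL (mem_Iic.1 hj)).le)
  have htail : ∀ j ∈ (Iic L)ᶜ, max (u j - τ) 0 = 0 := fun j hj =>
    max_eq_right (sub_nonpos.2 (le_prefixShift_of_lt hsort hmax (by simpa using hj)))
  rw [← sum_add_sum_compl (Iic L), sum_congr rfl hhead, sum_congr rfl htail, sum_const_zero,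
    add_zero, sum_sub_distrib, sum_const, Fin.card_Iic, nsmul_eq_mul]
  simp only [τ, prefixShift]
  push_cast
  field_simp
  ring

end SortedThreshold

/-- Let `M ≥ 1`, `h > 0`, and `u ∈ ℝ^M` sorted in decreasing order. Let `K`
be the set of (0-based) indices `k` with `(Σ_{r≤k} u_r − h)/(k+1) < u_k` (in 1-based terms,
the indices `k ∈ {1,…,M}` with `(Σ_{r=1}^k u_r − h)/k < u_k`). Then `K` contains the first
index (so it is nonempty), and for `L = max K`, `τ = (Σ_{r≤L} u_r − h)/(L+1)`, and
`v_j = max(u_j − τ, 0)`, the vector `v` lies in the scaled simplex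
`Δ_h = {x : x_j ≥ 0, Σ_j x_j = h}` and is the Euclidean projection of `u` onto `Δ_h`:
`‖v − u‖ ≤ ‖x − u‖` for every `x ∈ Δ_h`, with equality only if `x = v`. -/
theorem simplex_projection_sort_threshold (M : ℕ) (hM : 0 < M) (h : ℝ) (hh : 0 < h)
    (u : EuclideanSpace ℝ (Fin M))
    (hsort : ∀ i j : Fin M, i ≤ j → u j ≤ u i)
    (K : Finset (Fin M))
    (hK : K = Finset.univ.filter
      (fun k : Fin M => ((∑ r ∈ Finset.Iic k, u r) - h) / ((k : ℕ) + 1) < u k)) :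
    (⟨0, hM⟩ : Fin M) ∈ K ∧
    ∀ L : Fin M, L ∈ K → (∀ k ∈ K, k ≤ L) →
      ∀ t : ℝ, t = ((∑ r ∈ Finset.Iic L, u r) - h) / ((L : ℕ) + 1) →
      ∀ v : EuclideanSpace ℝ (Fin M), (∀ j, v j = max (u j - t) 0) →
        ((∀ j, 0 ≤ v j) ∧ ∑ j, v j = h) ∧
        ∀ x : EuclideanSpace ℝ (Fin M), (∀ j, 0 ≤ x j) → (∑ j, x j = h) →
          ‖v - u‖ ≤ ‖x - u‖ ∧ (‖v - u‖ = ‖x - u‖ → x = v) := by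
  have hmemK : ∀ k, k ∈ K ↔ prefixShift u h k < u k := by simp [hK, prefixShift]
  have hanti : Antitone (u : Fin M → ℝ) := fun i j hij => hsort i j hij
  refine ⟨(hmemK _).2 (prefixShift_lt_of_pos u h hM hh), ?_⟩
  intro L hL hmax t ht v hv
  have hτ : t = prefixShift u h L := ht
  have hvsum : ∑ j, v j = h := by
    simp only [hv, hτ]
    exact sum_max_sub_prefixShift hanti ((hmemK L).1 hL) fun k hk => hmax k ((hmemK k).2 hk)
  refine ⟨⟨fun j => hv j ▸ le_max_right _ _, hvsum⟩, fun x hx hxsum => ?_⟩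
  have hinner := real_inner_sub_clip_sub_le_zero hv hx (hxsum.trans hvsum.symm)
  exact ⟨norm_sub_le_of_real_inner_le_zero hinner, eq_of_norm_sub_eq_of_real_inner_le_zero hinner⟩
end
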